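/- Typing of stores is invariant under the store theory: if Γ ⊢ s : σ and ⊢ s = t is derivable in the store theory, then Γ ⊢ t : σ. -/

import Mathlib

open Classical

/-- Locations -/
abbrev Loc := ℕ

/-! ### Syntax of λimp (de Bruijn indices) -/

mutual
inductive Val : Type where
  | var : ℕ → Val
  | lam : Comp → Val
inductive Comp : Type where
  | ret  : Val → Comp                     -- unit V
  | bind : Comp → Val → Comp              -- M ⋆ V
  | get  : Loc → Comp → Comp              -- get_ℓ(λ.M)
  | set  : Loc → Val → Comp → Comp        -- set_ℓ(V, M)
end

/-! ### Store and lookup terms -/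

mutual
inductive Store : Type where
  | emp : Store
  | upd : Loc → Lkp → Store → Store       -- set_ℓ(u, s)
inductive Lkp : Type where
  | val : Val → Lkp
  | lkp : Loc → Store → Lkp               -- get_ℓ(s)
end

def Store.dom : Store → Finset Loc
  | .emp => ∅
  | .upd ℓ _ s => insert ℓ s.dom

/-- s ∖ ℓ -/
def Store.erase (ℓ : Loc) : Store → Store
  | .emp => .emp
  | .upd ℓ' u s => if ℓ' = ℓ then s.erase ℓ else .upd ℓ' u (s.erase ℓ)

/-! ### The equational store theory -/

mutual
/-- ⊢ s = t -/
inductive StEq : Store → Store → Prop where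
  | refl (s) : StEq s s
  | symm : StEq s t → StEq t s
  | trans : StEq s t → StEq t r → StEq s r
  | congr : LkEq u u' → StEq s s' → StEq (.upd ℓ u s) (.upd ℓ u' s')
  | setGet (h : ℓ ∈ s.dom) : StEq (.upd ℓ (.lkp ℓ s) s) s
  | overwrite : StEq (.upd ℓ u (.upd ℓ w s)) (.upd ℓ u s)
  | commute (h : ℓ ≠ ℓ') :
      StEq (.upd ℓ u (.upd ℓ' w s)) (.upd ℓ' w (.upd ℓ u s))
/-- ⊢ u = u' -/
inductive LkEq : Lkp → Lkp → Prop where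
  | refl (u) : LkEq u u
  | symm : LkEq u v → LkEq v u
  | trans : LkEq u v → LkEq v w → LkEq u w
  | congr (ℓ) (h : ℓ ∈ s.dom) : StEq s s' → LkEq (.lkp ℓ s) (.lkp ℓ s')
  | getSet : LkEq (.lkp ℓ (.upd ℓ u s)) u
  | getSetNe (h : ℓ ≠ ℓ') : LkEq (.lkp ℓ (.upd ℓ' u s)) (.lkp ℓ s)
end

/-- Extensional equivalence s ≃ t of store terms. -/
def StExtEq (s t : Store) : Prop :=
  s.dom = t.dom ∧ ∀ ℓ ∈ s.dom, LkEq (.lkp ℓ s) (.lkp ℓ t)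

/-! ### Normal forms of stores -/

def Store.size : Store → ℕ
  | .emp => 0
  | .upd _ _ s => s.size + 1

theorem Store.erase_size (ℓ : Loc) : (s : Store) → (s.erase ℓ).size ≤ s.size
  | .emp => le_refl _
  | .upd ℓ' u s => by
      unfold Store.erase
      by_cases h : ℓ' = ℓ
      · simpa [h, Store.size] using le_trans (Store.erase_size ℓ s) (Nat.le_succ _)
      · simpa [h, Store.size] using Nat.succ_le_succ (Store.erase_size ℓ s)

def Store.nf : Store → Store
  | .emp => .emp
  | .upd ℓ u s => .upd ℓ u ((s.erase ℓ).nf)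
termination_by s => s.size
decreasing_by
  simp only [Store.size]
  exact Nat.lt_succ_of_le (Store.erase_size ℓ s)

/-! ### Closedness -/

mutual
def Val.ClosedUnder : ℕ → Val → Prop
  | k, .var n => n < k
  | k, .lam M => Comp.ClosedUnder (k+1) M
def Comp.ClosedUnder : ℕ → Comp → Prop
  | k, .ret V => Val.ClosedUnder k V
  | k, .bind M V => Comp.ClosedUnder k M ∧ Val.ClosedUnder k V
  | k, .get _ M => Comp.ClosedUnder (k+1) M
  | k, .set _ V M => Val.ClosedUnder k V ∧ Comp.ClosedUnder k M
end

mutual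
def Store.Closed : Store → Prop
  | .emp => True
  | .upd _ u s => u.Closed ∧ s.Closed
def Lkp.Closed : Lkp → Prop
  | .val V => Val.ClosedUnder 0 V
  | .lkp _ s => s.Closed
end

/-! ### Substitution -/

mutual
def Val.shiftAux (c : ℕ) : Val → Val
  | .var n => if n < c then .var n else .var (n+1)
  | .lam M => .lam (Comp.shiftAux (c+1) M)
def Comp.shiftAux (c : ℕ) : Comp → Comp
  | .ret V => .ret (V.shiftAux c)
  | .bind M V => .bind (M.shiftAux c) (V.shiftAux c)
  | .get ℓ M => .get ℓ (M.shiftAux (c+1))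
  | .set ℓ V M => .set ℓ (V.shiftAux c) (M.shiftAux c)
end

mutual
/-- capture-avoiding substitution of `W` for the variable `k` in a value -/
def Val.substV (k : ℕ) (W : Val) : Val → Val
  | .var n => if n = k then W else if k < n then .var (n-1) else .var n
  | .lam M => .lam (Comp.substC (k+1) (Val.shiftAux 0 W) M)
/-- capture-avoiding substitution of `W` for the variable `k` in a computation: M[W/k] -/
def Comp.substC (k : ℕ) (W : Val) : Comp → Comp
  | .ret V => .ret (Val.substV k W V)
  | .bind M V => .bind (Comp.substC k W M) (Val.substV k W V)
  | .get ℓ M => .get ℓ (Comp.substC (k+1) (Val.shiftAux 0 W) M)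
  | .set ℓ V M => .set ℓ (Val.substV k W V) (Comp.substC k W M)
end

/-- simultaneous substitution of closed values for the free variables 0,…,n-1 -/
def msubst (Vs : List Val) (M : Comp) : Comp :=
  Vs.foldl (fun acc V => Comp.substC 0 V acc) M

/-! ### Small-step reduction on configurations -/

inductive Red : Comp × Store → Comp × Store → Prop where
  | beta : Red (.bind (.ret V) (.lam M), s) (Comp.substC 0 V M, s)
  | bindl : Red (M, s) (N, t) → Red (.bind M V, s) (.bind N V, t)
  | get : LkEq (.lkp ℓ s) (.val V) → Red (.get ℓ M, s) (Comp.substC 0 V M, s)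
  | set : Red (.set ℓ V M, s) (M, .upd ℓ (.val V) s)

/-- reflexive-transitive closure →* -/
def RedStar : Comp × Store → Comp × Store → Prop := Relation.ReflTransGen Red

/-! ### Big-step convergence -/

inductive BigStep : Comp → Store → Val → Store → Prop where
  | ret : BigStep (.ret V) s V s
  | bind : BigStep M s V s' → BigStep (Comp.substC 0 V N) s' W t →
      BigStep (.bind M (.lam N)) s W t
  | get : LkEq (.lkp ℓ s) (.val V) → BigStep (Comp.substC 0 V M) s W t →
      BigStep (.get ℓ M) s W t
  | set : BigStep M (.upd ℓ (.val V) s) W t → BigStep (.set ℓ V M) s W t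

/-- the partial function M(s): the result (V,t) if (M,s) ⇓ (V,t), and ⊥ (i.e. `none`) otherwise -/
noncomputable def run (M : Comp) (s : Store) : Option (Val × Store) :=
  if h : ∃ p : Val × Store, BigStep M s p.1 p.2 then some h.choose else none

/-! ### Intersection types of the four sorts -/

mutual
/-- value types δ -/
inductive TyD : Type where
  | arrow : TyD → TyT → TyD
  | inter : TyD → TyD → TyD
  | omega : TyD
/-- store types σ -/
inductive TyS : Type where
  | loc : Loc → TyD → TyS
  | inter : TyS → TyS → TyS
  | omega : TyS
/-- result types κ -/
inductive TyC : Type where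
  | prod : TyD → TyS → TyC
  | inter : TyC → TyC → TyC
  | omega : TyC
/-- computation types τ -/
inductive TyT : Type where
  | arrow : TyS → TyC → TyT
  | inter : TyT → TyT → TyT
  | omega : TyT
end

def TyS.domS : TyS → Finset Loc
  | .loc ℓ _ => {ℓ}
  | .inter σ σ' => σ.domS ∪ σ'.domS
  | .omega => ∅

/-! ### Subtyping -/

mutual
inductive SubD : TyD → TyD → Prop where
  | refl (δ) : SubD δ δ
  | trans : SubD δ₁ δ₂ → SubD δ₂ δ₃ → SubD δ₁ δ₃
  | leOmega (δ) : SubD δ .omega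
  | interLeft : SubD (TyD.inter δ δ') δ
  | interRight : SubD (TyD.inter δ δ') δ'
  | interGlb : SubD δ δ₁ → SubD δ δ₂ → SubD δ (TyD.inter δ₁ δ₂)
  | interMono : SubD δ₁ δ₁' → SubD δ₂ δ₂' → SubD (TyD.inter δ₁ δ₂) (TyD.inter δ₁' δ₂')
  | omegaArrow : SubD .omega (.arrow .omega .omega)
  | arrowInter : SubD ((TyD.arrow δ τ).inter (.arrow δ τ')) (TyD.arrow δ (TyT.inter τ τ'))
  | arrowMono : SubD δ' δ → SubT τ τ' → SubD (.arrow δ τ) (.arrow δ' τ')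
inductive SubS : TyS → TyS → Prop where
  | refl (σ) : SubS σ σ
  | trans : SubS σ₁ σ₂ → SubS σ₂ σ₃ → SubS σ₁ σ₃
  | leOmega (σ) : SubS σ .omega
  | interLeft : SubS (TyS.inter σ σ') σ
  | interRight : SubS (TyS.inter σ σ') σ'
  | interGlb : SubS σ σ₁ → SubS σ σ₂ → SubS σ (TyS.inter σ₁ σ₂)
  | interMono : SubS σ₁ σ₁' → SubS σ₂ σ₂' → SubS (TyS.inter σ₁ σ₂) (TyS.inter σ₁' σ₂')
  | locInter : SubS ((TyS.loc ℓ δ).inter (.loc ℓ δ')) (TyS.loc ℓ (TyD.inter δ δ'))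
  | locMono : SubD δ δ' → SubS (.loc ℓ δ) (.loc ℓ δ')
inductive SubC : TyC → TyC → Prop where
  | refl (κ) : SubC κ κ
  | trans : SubC κ₁ κ₂ → SubC κ₂ κ₃ → SubC κ₁ κ₃
  | leOmega (κ) : SubC κ .omega
  | interLeft : SubC (TyC.inter κ κ') κ
  | interRight : SubC (TyC.inter κ κ') κ'
  | interGlb : SubC κ κ₁ → SubC κ κ₂ → SubC κ (TyC.inter κ₁ κ₂)
  | interMono : SubC κ₁ κ₁' → SubC κ₂ κ₂' → SubC (TyC.inter κ₁ κ₂) (TyC.inter κ₁' κ₂')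
  | omegaProd : SubC .omega (.prod .omega .omega)
  | prodInter : SubC ((TyC.prod δ σ).inter (.prod δ' σ')) (TyC.prod (TyD.inter δ δ') (TyS.inter σ σ'))
  | prodMono : SubD δ δ' → SubS σ σ' → SubC (.prod δ σ) (.prod δ' σ')
inductive SubT : TyT → TyT → Prop where
  | refl (τ) : SubT τ τ
  | trans : SubT τ₁ τ₂ → SubT τ₂ τ₃ → SubT τ₁ τ₃
  | leOmega (τ) : SubT τ .omega
  | interLeft : SubT (TyT.inter τ τ') τ
  | interRight : SubT (TyT.inter τ τ') τ'
  | interGlb : SubT τ τ₁ → SubT τ τ₂ → SubT τ (TyT.inter τ₁ τ₂)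
  | interMono : SubT τ₁ τ₁' → SubT τ₂ τ₂' → SubT (TyT.inter τ₁ τ₂) (TyT.inter τ₁' τ₂')
  | omegaArrow : SubT .omega (.arrow .omega .omega)
  | arrowInter : SubT ((TyT.arrow σ κ).inter (.arrow σ κ')) (TyT.arrow σ (TyC.inter κ κ'))
  | arrowMono : SubS σ' σ → SubC κ κ' → SubT (.arrow σ κ) (.arrow σ' κ')
end

/-! ### Finite intersections -/

def InterD (l : List TyD) : TyD := l.foldr TyD.inter TyD.omega
def InterS (l : List TyS) : TyS := l.foldr TyS.inter TyS.omega
def InterC (l : List TyC) : TyC := l.foldr TyC.inter TyC.omega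
def InterT (l : List TyT) : TyT := l.foldr TyT.inter TyT.omega

/-! ### Type assignment -/

/-- typing contexts (de Bruijn) -/
abbrev Ctx := List TyD

mutual
inductive TypV : Ctx → Val → TyD → Prop where
  | var : Γ[n]? = some δ → TypV Γ (.var n) δ
  | lam : TypC (δ :: Γ) M τ → TypV Γ (.lam M) (.arrow δ τ)
  | omega : TypV Γ V .omega
  | inter : TypV Γ V δ → TypV Γ V δ' → TypV Γ V (TyD.inter δ δ')
  | sub : TypV Γ V δ → SubD δ δ' → TypV Γ V δ'
inductive TypC : Ctx → Comp → TyT → Prop where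
  | ret : TypV Γ V δ → TypC Γ (.ret V) (.arrow σ (.prod δ σ))
  | bind : TypC Γ M (.arrow σ (.prod δ' σ')) →
      TypV Γ V (.arrow δ' (.arrow σ' (.prod δ'' σ''))) →
      TypC Γ (.bind M V) (.arrow σ (.prod δ'' σ''))
  | get : TypC (δ :: Γ) M (.arrow σ κ) →
      TypC Γ (.get ℓ M) (.arrow ((TyS.loc ℓ δ).inter σ) κ)
  | set : TypV Γ V δ → TypC Γ M (.arrow ((TyS.loc ℓ δ).inter σ) κ) →
      ℓ ∉ σ.domS → TypC Γ (.set ℓ V M) (.arrow σ κ)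
  | omega : TypC Γ M .omega
  | inter : TypC Γ M τ → TypC Γ M τ' → TypC Γ M (TyT.inter τ τ')
  | sub : TypC Γ M τ → SubT τ τ' → TypC Γ M τ'
end

mutual
inductive TypS : Ctx → Store → TyS → Prop where
  | updA : TypL Γ u δ → TypS Γ (.upd ℓ u s) (.loc ℓ δ)
  | updB : TypS Γ s (.loc ℓ' δ) → ℓ ≠ ℓ' → TypS Γ (.upd ℓ u s) (.loc ℓ' δ)
  | omega : TypS Γ s .omega
  | inter : TypS Γ s σ → TypS Γ s σ' → TypS Γ s (TyS.inter σ σ')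
  | sub : TypS Γ s σ → SubS σ σ' → TypS Γ s σ'
inductive TypL : Ctx → Lkp → TyD → Prop where
  | val : TypV Γ V δ → TypL Γ (.val V) δ
  | lkp : TypS Γ s (.loc ℓ δ) → TypL Γ (.lkp ℓ s) δ
  | omega : TypL Γ u .omega
  | inter : TypL Γ u δ → TypL Γ u δ' → TypL Γ u (TyD.inter δ δ')
  | sub : TypL Γ u δ → SubD δ δ' → TypL Γ u δ'
end

inductive TypConf : Ctx → Comp → Store → TyC → Prop where
  | conf : TypC Γ M (.arrow σ κ) → TypS Γ s σ → TypConf Γ M s κ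
  | omega : TypConf Γ M s .omega
  | inter : TypConf Γ M s κ → TypConf Γ M s κ' → TypConf Γ M s (TyC.inter κ κ')
  | sub : TypConf Γ M s κ → SubC κ κ' → TypConf Γ M s κ'

/-! ### Saturated sets -/

mutual
def SatD : TyD → Set Val
  | .omega => {V | Val.ClosedUnder 0 V}
  | .arrow δ τ =>
      {V | Val.ClosedUnder 0 V ∧ ∀ W ∈ SatD δ, Comp.bind (.ret W) V ∈ SatT τ}
  | .inter δ δ' => SatD δ ∩ SatD δ'
def SatS : TyS → Set Store
  | .omega => {s | s.Closed}
  | .loc ℓ δ =>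
      {s | s.Closed ∧ ℓ ∈ s.dom ∧ ∃ V ∈ SatD δ, LkEq (.lkp ℓ s) (.val V)}
  | .inter σ σ' => SatS σ ∩ SatS σ'
def SatC : TyC → Set (Option (Val × Store))
  | .omega => {r | ∀ V t, r = some (V, t) → Val.ClosedUnder 0 V ∧ Store.Closed t}
  | .prod δ σ => {r | ∃ V t, r = some (V, t) ∧ V ∈ SatD δ ∧ t ∈ SatS σ}
  | .inter κ κ' => SatC κ ∩ SatC κ'
def SatT : TyT → Set Comp
  | .omega => {M | Comp.ClosedUnder 0 M}
  | .arrow σ κ => {M | Comp.ClosedUnder 0 M ∧ ∀ s ∈ SatS σ, run M s ∈ SatC κ}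
  | .inter τ τ' => SatT τ ∩ SatT τ'
end

/-! A store type σ is equivalent to the intersection of the location types
`⟨ℓ : σ.proj ℓ⟩` over `ℓ ∈ dom σ`, where `σ.proj ℓ` collects everything σ says
about ℓ. So it suffices that provably equal stores have the same location types `⟨ℓ : δ⟩` (and
provably equal lookup terms the same types). This goes by induction on the equality
derivation, using the two inversion principles
`set_ℓ(u, s) : ⟨ℓ' : δ⟩ ↔ (if ℓ' = ℓ then u : δ else s : ⟨ℓ' : δ⟩)` and
`get_ℓ(s) : δ ↔ ω ≤ δ ∨ s : ⟨ℓ : δ⟩`. -/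

theorem SubD.le_inter_of_omega_right {δ δ' : TyD}
    (h : SubD .omega δ') : SubD δ (.inter δ δ') :=
  SubD.interGlb (SubD.refl _) ((SubD.leOmega _).trans h)

theorem SubD.le_inter_of_omega_left {δ δ' : TyD}
    (h : SubD .omega δ) : SubD δ' (.inter δ δ') :=
  SubD.interGlb ((SubD.leOmega _).trans h) (SubD.refl _)

namespace TyS

def proj : TyS → Loc → TyD
  | .loc ℓ' δ, ℓ => if ℓ' = ℓ then δ else .omega
  | .inter σ σ', ℓ => .inter (σ.proj ℓ) (σ'.proj ℓ)
  | .omega, _ => .omega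

@[simp] theorem proj_loc_self (ℓ : Loc) (δ : TyD) : (TyS.loc ℓ δ).proj ℓ = δ := if_pos rfl

theorem omega_subD_proj : ∀ {σ : TyS} {ℓ : Loc}, ℓ ∉ σ.domS → SubD .omega (σ.proj ℓ)
  | .loc ℓ' δ, ℓ, h => by
      rw [domS, Finset.mem_singleton] at h
      rw [proj, if_neg (Ne.symm h)]
      exact SubD.refl _
  | .inter σ σ', ℓ, h => by
      rw [domS, Finset.mem_union, not_or] at h
      exact SubD.interGlb (omega_subD_proj h.1) (omega_subD_proj h.2)
  | .omega, _, _ => SubD.refl _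

theorem subS_loc_proj :
    ∀ {σ : TyS} {ℓ : Loc}, ℓ ∈ σ.domS → SubS σ (.loc ℓ (σ.proj ℓ))
  | .loc ℓ' δ, ℓ, h => by
      rw [domS, Finset.mem_singleton] at h
      subst h
      rw [proj_loc_self]
      exact SubS.refl _
  | .inter σ σ', ℓ, h => by
      by_cases h₁ : ℓ ∈ σ.domS <;> by_cases h₂ : ℓ ∈ σ'.domS
      · exact (SubS.interMono (subS_loc_proj h₁) (subS_loc_proj h₂)).trans SubS.locInter
      · exact (SubS.interLeft.trans (subS_loc_proj h₁)).trans
          (SubS.locMono (omega_subD_proj h₂).le_inter_of_omega_right)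
      · exact (SubS.interRight.trans (subS_loc_proj h₂)).trans
          (SubS.locMono (omega_subD_proj h₁).le_inter_of_omega_left)
      · simp [domS, h₁, h₂] at h
  | .omega, _, h => by simp [domS] at h

end TyS

namespace SubS

theorem domS_subset {σ σ' : TyS} : SubS σ σ' → σ'.domS ⊆ σ.domS
  | .refl _ => subset_rfl
  | .trans h h' => h'.domS_subset.trans h.domS_subset
  | .leOmega _ => by simp [TyS.domS]
  | .interLeft => by simp [TyS.domS]
  | .interRight => by simp [TyS.domS]
  | .interGlb h h' => Finset.union_subset h.domS_subset h'.domS_subset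
  | .interMono h h' => Finset.union_subset_union h.domS_subset h'.domS_subset
  | .locInter => by simp [TyS.domS]
  | .locMono _ => by simp [TyS.domS]

theorem proj_mono {σ σ' : TyS} (h : SubS σ σ') (ℓ : Loc) :
    SubD (σ.proj ℓ) (σ'.proj ℓ) := by
  match h with
  | .refl _ => exact SubD.refl _
  | .trans h h' => exact (h.proj_mono ℓ).trans (h'.proj_mono ℓ)
  | .leOmega _ => exact SubD.leOmega _
  | .interLeft => exact SubD.interLeft
  | .interRight => exact SubD.interRight
  | .interGlb h h' => exact SubD.interGlb (h.proj_mono ℓ) (h'.proj_mono ℓ)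
  | .interMono h h' => exact SubD.interMono (h.proj_mono ℓ) (h'.proj_mono ℓ)
  | @locInter ℓ' _ _ =>
      by_cases e : ℓ' = ℓ
      · simp only [TyS.proj, if_pos e]; exact SubD.refl _
      · simp only [TyS.proj, if_neg e]; exact SubD.leOmega _
  | @locMono _ _ ℓ' h =>
      by_cases e : ℓ' = ℓ
      · simp only [TyS.proj, if_pos e]; exact h
      · simp only [TyS.proj, if_neg e]; exact SubD.refl _

end SubS

theorem typS_of_forall_loc {Γ : Ctx} {s : Store} :
    ∀ {σ : TyS}, (∀ ℓ ∈ σ.domS, TypS Γ s (.loc ℓ (σ.proj ℓ))) → TypS Γ s σ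
  | .loc ℓ δ, h => by simpa using h ℓ (by simp [TyS.domS])
  | .inter σ σ', h =>
      TypS.inter
        (typS_of_forall_loc fun ℓ hℓ =>
          (h ℓ (by simp [TyS.domS, hℓ])).sub (SubS.locMono SubD.interLeft))
        (typS_of_forall_loc fun ℓ hℓ =>
          (h ℓ (by simp [TyS.domS, hℓ])).sub (SubS.locMono SubD.interRight))
  | .omega, _ => TypS.omega

theorem typS_iff_forall_loc {Γ : Ctx} {s : Store} {σ : TyS} :
    TypS Γ s σ ↔ ∀ ℓ ∈ σ.domS, TypS Γ s (.loc ℓ (σ.proj ℓ)) :=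
  ⟨fun h _ hℓ => h.sub (TyS.subS_loc_proj hℓ), typS_of_forall_loc⟩

theorem TypS.upd_inv {Γ : Ctx} {ℓ : Loc} {u : Lkp} {s t : Store} {σ : TyS}
    (h : TypS Γ t σ) (ht : t = .upd ℓ u s) :
    TypL Γ u (σ.proj ℓ) ∧
      ∀ ℓ' ∈ σ.domS, ℓ' ≠ ℓ → TypS Γ s (.loc ℓ' (σ.proj ℓ')) := by
  match h with
  | .updA hu =>
      cases ht
      refine ⟨by simpa using hu, fun ℓ' hℓ' hne => ?_⟩
      simp [TyS.domS, hne] at hℓ'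
  | @updB _ _ ℓ' δ _ _ hs hne =>
      cases ht
      refine ⟨?_, fun ℓ'' hℓ'' _ => ?_⟩
      · rw [TyS.proj, if_neg (Ne.symm hne)]
        exact TypL.omega
      · rw [TyS.domS, Finset.mem_singleton] at hℓ''
        subst hℓ''
        simpa using hs
  | .omega => exact ⟨TypL.omega, fun _ hℓ' => by simp [TyS.domS] at hℓ'⟩
  | @inter _ _ σ₁ σ₂ h₁ h₂ =>
      obtain ⟨hu₁, hs₁⟩ := h₁.upd_inv ht
      obtain ⟨hu₂, hs₂⟩ := h₂.upd_inv ht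
      refine ⟨TypL.inter hu₁ hu₂, fun ℓ' hℓ' hne => ?_⟩
      by_cases m₁ : ℓ' ∈ σ₁.domS <;> by_cases m₂ : ℓ' ∈ σ₂.domS
      · exact (TypS.inter (hs₁ ℓ' m₁ hne) (hs₂ ℓ' m₂ hne)).sub SubS.locInter
      · exact (hs₁ ℓ' m₁ hne).sub
          (SubS.locMono (TyS.omega_subD_proj m₂).le_inter_of_omega_right)
      · exact (hs₂ ℓ' m₂ hne).sub
          (SubS.locMono (TyS.omega_subD_proj m₁).le_inter_of_omega_left)
      · simp [TyS.domS, m₁, m₂] at hℓ'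
  | .sub h hsub =>
      obtain ⟨hu, hs⟩ := h.upd_inv ht
      exact ⟨hu.sub (hsub.proj_mono ℓ), fun ℓ' hℓ' hne =>
        (hs ℓ' (hsub.domS_subset hℓ') hne).sub (SubS.locMono (hsub.proj_mono ℓ'))⟩

theorem typS_upd_loc_iff {Γ : Ctx} {ℓ ℓ' : Loc} {u : Lkp} {s : Store} {δ : TyD} :
    TypS Γ (.upd ℓ u s) (.loc ℓ' δ) ↔
      if ℓ' = ℓ then TypL Γ u δ else TypS Γ s (.loc ℓ' δ) := by
  split_ifs with e
  · subst e
    exact ⟨fun h => by simpa using (h.upd_inv rfl).1, TypS.updA⟩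
  · refine ⟨fun h => by simpa using (h.upd_inv rfl).2 ℓ' (by simp [TyS.domS]) e,
      fun h => TypS.updB h (Ne.symm e)⟩

theorem typS_loc_omega_of_mem {Γ : Ctx} {ℓ : Loc} :
    ∀ {s : Store}, ℓ ∈ s.dom → TypS Γ s (.loc ℓ .omega)
  | .emp, h => by simp [Store.dom] at h
  | .upd ℓ' _ s, h => by
      rw [typS_upd_loc_iff]
      split_ifs with e
      · exact TypL.omega
      · rw [Store.dom, Finset.mem_insert] at h
        exact typS_loc_omega_of_mem (h.resolve_left e)

theorem TypL.lkp_inv {Γ : Ctx} {ℓ : Loc} {s : Store} {v : Lkp} {δ : TyD}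
    (h : TypL Γ v δ) (hv : v = .lkp ℓ s) : SubD .omega δ ∨ TypS Γ s (.loc ℓ δ) := by
  match h with
  | .val _ => cases hv
  | .lkp hs => cases hv; exact .inr hs
  | .omega => exact .inl (SubD.refl _)
  | .inter h₁ h₂ =>
      rcases h₁.lkp_inv hv, h₂.lkp_inv hv with ⟨o₁ | t₁, o₂ | t₂⟩
      · exact .inl (SubD.interGlb o₁ o₂)
      · exact .inr <| t₂.sub <| SubS.locMono o₁.le_inter_of_omega_left
      · exact .inr <| t₁.sub <| SubS.locMono o₂.le_inter_of_omega_right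
      · exact .inr ((TypS.inter t₁ t₂).sub SubS.locInter)
  | .sub h hsub =>
      rcases h.lkp_inv hv with o | t
      · exact .inl (o.trans hsub)
      · exact .inr (t.sub (SubS.locMono hsub))

theorem typL_lkp_iff {Γ : Ctx} {ℓ : Loc} {s : Store} {δ : TyD} :
    TypL Γ (.lkp ℓ s) δ ↔ SubD .omega δ ∨ TypS Γ s (.loc ℓ δ) :=
  ⟨fun h => h.lkp_inv rfl, fun h => h.elim (TypL.omega.sub ·) TypL.lkp⟩

theorem typL_lkp_iff_of_mem {Γ : Ctx} {ℓ : Loc} {s : Store} {δ : TyD} (hℓ : ℓ ∈ s.dom) :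
    TypL Γ (.lkp ℓ s) δ ↔ TypS Γ s (.loc ℓ δ) := by
  rw [typL_lkp_iff, or_iff_right_of_imp]
  exact fun o => (typS_loc_omega_of_mem hℓ).sub (SubS.locMono o)

mutual

theorem StEq.typS_loc_iff {Γ : Ctx} {ℓ : Loc} {δ : TyD} {s t : Store} (h : StEq s t) :
    TypS Γ s (.loc ℓ δ) ↔ TypS Γ t (.loc ℓ δ) := by
  match h with
  | .refl _ => exact Iff.rfl
  | .symm h => exact h.typS_loc_iff.symm
  | .trans h h' => exact h.typS_loc_iff.trans h'.typS_loc_iff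
  | .congr hu hs =>
      rw [typS_upd_loc_iff, typS_upd_loc_iff]
      split_ifs
      exacts [hu.typL_iff, hs.typS_loc_iff]
  | .setGet hℓ =>
      rw [typS_upd_loc_iff]
      split_ifs with e
      · subst e
        exact typL_lkp_iff_of_mem hℓ
      · exact Iff.rfl
  | .overwrite =>
      simp only [typS_upd_loc_iff]
      split_ifs <;> rfl
  | .commute hne =>
      simp only [typS_upd_loc_iff]
      split_ifs <;> simp_all

theorem LkEq.typL_iff {Γ : Ctx} {δ : TyD} {u v : Lkp} (h : LkEq u v) :
    TypL Γ u δ ↔ TypL Γ v δ := by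
  match h with
  | .refl _ => exact Iff.rfl
  | .symm h => exact h.typL_iff.symm
  | .trans h h' => exact h.typL_iff.trans h'.typL_iff
  | .congr _ _ hs => rw [typL_lkp_iff, typL_lkp_iff, hs.typS_loc_iff]
  | .getSet =>
      rw [typL_lkp_iff, typS_upd_loc_iff, if_pos rfl]
      exact or_iff_right_of_imp (TypL.omega.sub ·)
  | .getSetNe hne => rw [typL_lkp_iff, typL_lkp_iff, typS_upd_loc_iff, if_neg hne]

end

/-- typing of stores is invariant under the store theory. -/
theorem store_typing_invariant {Γ : Ctx} {s t : Store} {σ : TyS}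
    (h : TypS Γ s σ) (he : StEq s t) : TypS Γ t σ := by
  rw [typS_iff_forall_loc] at h ⊢
  exact fun ℓ hℓ => he.typS_loc_iff.mp (h ℓ hℓ)
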